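/- Let a : ℂ → ℂ be an entire function such that F := exp(−a) is of exponential type at most 1, i.e., limsup_{r→∞} (log max_{|z|=r} |exp(−a(z))|)/r ≤ 1. Suppose that for every C > 0 there exist arbitrarily large natural numbers m with max_{|z|=m} |a(z)| > C·exp(m²). Then the entire function z ↦ a(z)·exp(−a(z)) is not of finite exponential type: for every T > 0 there exist arbitrarily large r > 0 with max_{|z|=r} |a(z)·exp(−a(z))| > exp(T·r). -/

import Mathlib

/-!
If `‖a e^{-a}‖ ≤ e^{T r}` on all large circles, then `Re (-a z) ≤ T ‖z‖ + 1` for large `‖z‖`: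
where `Re (-a)` exceeds that bound, both `‖a‖ ≥ |Re a| > 1` and `‖e^{-a}‖ > e^{T ‖z‖ + 1}`.
A one-sided linear bound on the real part of an entire function gives, by the
Borel–Carathéodory theorem, a linear bound on its modulus, which is incompatible with
`max_{|z|=m} |a| > e^{m²}` for arbitrarily large `m`.
-/

open Filter

/-- maximum modulus of `F` on the circle of radius `r` centered at the origin. -/
noncomputable def maxMod (F : ℂ → ℂ) (r : ℝ) : ℝ :=
  sSup ((fun z => ‖F z‖) '' Metric.sphere (0 : ℂ) r)

lemma norm_le_maxMod {F : ℂ → ℂ} (hF : Continuous F) (z : ℂ) : ‖F z‖ ≤ maxMod F ‖z‖ :=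
  le_csSup ((isCompact_sphere 0 ‖z‖).bddAbove_image (continuous_norm.comp hF).continuousOn)
    ⟨z, mem_sphere_zero_iff_norm.2 rfl, rfl⟩

lemma maxMod_le {F : ℂ → ℂ} {r C : ℝ} (hC : 0 ≤ C) (h : ∀ z : ℂ, ‖z‖ = r → ‖F z‖ ≤ C) :
    maxMod F r ≤ C :=
  Real.sSup_le (by rintro _ ⟨z, hz, rfl⟩; exact h z (mem_sphere_zero_iff_norm.1 hz)) hC

lemma re_neg_le_of_norm_mul_exp_neg_le {w : ℂ} {s : ℝ} (hs : 1 ≤ s)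
    (h : ‖w * Complex.exp (-w)‖ ≤ Real.exp s) : (-w).re ≤ s := by
  by_contra! hlt
  have hw : s < ‖w‖ := hlt.trans_le ((Complex.re_le_norm _).trans_eq (norm_neg w))
  rw [norm_mul, Complex.norm_exp] at h
  have hexp : Real.exp s < Real.exp (-w).re := Real.exp_lt_exp.2 hlt
  nlinarith [Real.exp_pos s]

lemma exists_re_le_linear {f : ℂ → ℂ} (hf : Continuous f) {r₀ α β : ℝ} (hα : 0 ≤ α)
    (h : ∀ z : ℂ, r₀ < ‖z‖ → (f z).re ≤ α * ‖z‖ + β) :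
    ∃ β' : ℝ, 0 < β' ∧ ∀ z : ℂ, (f z).re ≤ α * ‖z‖ + β' := by
  obtain ⟨K, hK⟩ := (isCompact_closedBall (0 : ℂ) r₀).exists_bound_of_continuousOn hf.continuousOn
  refine ⟨|β| + |K| + 1, by positivity, fun z => ?_⟩
  have hαz : 0 ≤ α * ‖z‖ := by positivity
  rcases lt_or_ge r₀ ‖z‖ with hz | hz
  · linarith [h z hz, le_abs_self β, abs_nonneg K]
  · have hK' := hK z (mem_closedBall_zero_iff.2 hz)
    linarith [Complex.re_le_norm (f z), le_abs_self K, abs_nonneg β]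

lemma norm_le_of_re_le_linear {f : ℂ → ℂ} (hf : Differentiable ℂ f) {α β : ℝ} (hα : 0 ≤ α)
    (hβ : 0 < β) (h : ∀ z : ℂ, (f z).re ≤ α * ‖z‖ + β) (z : ℂ) :
    ‖f z‖ ≤ 4 * α * ‖z‖ + 2 * α + 2 * β + 3 * ‖f 0‖ := by
  have hz : 0 ≤ ‖z‖ := norm_nonneg z
  have hM : 0 < α * (2 * ‖z‖ + 1) + β := by positivity
  have hre : Set.MapsTo f (Metric.ball 0 (2 * ‖z‖ + 1)) {w | w.re ≤ α * (2 * ‖z‖ + 1) + β} :=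
    fun w hw => (h w).trans (by gcongr; exact (mem_ball_zero_iff.1 hw).le)
  have hbc := Complex.borelCaratheodory hM hf.differentiableOn hre (by positivity)
    (mem_ball_zero_iff.2 (by linarith))
  rw [show 2 * ‖z‖ + 1 - ‖z‖ = ‖z‖ + 1 by ring, ← add_div, le_div_iff₀ (by positivity)] at hbc
  nlinarith [norm_nonneg (f 0), mul_nonneg hα hz]

lemma exists_nat_linear_lt_exp_sq (A B : ℝ) :
    ∃ m₀ : ℕ, ∀ m : ℕ, m₀ ≤ m → A * m + B < Real.exp ((m : ℝ) ^ 2) := by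
  refine ⟨⌈|A| + |B|⌉₊ + 1, fun m hm => ?_⟩
  have hm' : |A| + |B| + 1 ≤ (m : ℝ) := by
    have := Nat.le_ceil (|A| + |B|)
    have : ((⌈|A| + |B|⌉₊ + 1 : ℕ) : ℝ) ≤ m := by exact_mod_cast hm
    push_cast at this
    linarith
  have hA : A * m ≤ |A| * m := by gcongr; exact le_abs_self A
  nlinarith [Real.add_one_le_exp ((m : ℝ) ^ 2), le_abs_self B, abs_nonneg A, abs_nonneg B]

theorem stmt_7 (a : ℂ → ℂ) (ha : Differentiable ℂ a)
    (hbig : ∀ C : ℝ, 0 < C → ∀ m₀ : ℕ, ∃ m : ℕ, m₀ ≤ m ∧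
      maxMod a (m : ℝ) > C * Real.exp ((m : ℝ) ^ 2)) :
    ∀ T : ℝ, 0 < T → ∀ r₀ : ℝ, ∃ r : ℝ, r₀ < r ∧
      maxMod (fun z => a z * Complex.exp (-a z)) r > Real.exp (T * r) := by
  intro T hT r₀
  by_contra! h
  have hre : ∀ z : ℂ, r₀ < ‖z‖ → (-a z).re ≤ T * ‖z‖ + 1 := fun z hz =>
    re_neg_le_of_norm_mul_exp_neg_le (by nlinarith [norm_nonneg z]) <|
      (norm_le_maxMod (by have := ha.continuous; fun_prop) z).trans <| (h _ hz).trans <|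
        Real.exp_le_exp.2 (by linarith)
  obtain ⟨β, hβ, hreβ⟩ := exists_re_le_linear ha.neg.continuous hT.le hre
  have hlin (z : ℂ) : ‖a z‖ ≤ 4 * T * ‖z‖ + 2 * T + 2 * β + 3 * ‖a 0‖ := by
    simpa only [Pi.neg_apply, norm_neg] using norm_le_of_re_le_linear ha.neg hT.le hβ hreβ z
  obtain ⟨m₀, hm₀⟩ := exists_nat_linear_lt_exp_sq (4 * T) (2 * T + 2 * β + 3 * ‖a 0‖)
  obtain ⟨m, hm, hbigm⟩ := hbig 1 one_pos m₀
  have hmax : maxMod a m ≤ 4 * T * m + (2 * T + 2 * β + 3 * ‖a 0‖) :=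
    maxMod_le (by positivity) fun z hz => by rw [← hz, ← add_assoc, ← add_assoc]; exact hlin z
  linarith [hm₀ m hm]
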